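/- In a 2-nilpotent cancellative residuated lattice (one whose monoid satisfies xyzyx = yxzxy), the inequalities (a ∧ e)²·b ≤ b·a and b·(a ∧ e)² ≤ a·b hold for all elements a, b. -/

import Mathlib

/-!
Since `c = a ⊓ 1` lies below `1`, the instance `x, y, z := b, c, 1` of `L₂` gives
`b c c b = c b b c`, and hence `b · (c c b b) = c · (b b c b) ≤ b · (b c b)`. Cancelling `b`
on the left and then on the right leaves `c² b ≤ b c ≤ b a`; the other inequality is symmetric.
-/

/-- A residuated lattice: a lattice-ordered monoid with left and right residuals. -/
class ResiduatedLattice (α : Type*) extends Lattice α, Monoid α where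
  /-- `ldiv a c` is `a \ c`. -/
  ldiv : α → α → α
  /-- `rdiv c b` is `c / b`. -/
  rdiv : α → α → α
  mul_le_iff_le_rdiv : ∀ a b c : α, a * b ≤ c ↔ a ≤ rdiv c b
  mul_le_iff_le_ldiv : ∀ a b c : α, a * b ≤ c ↔ b ≤ ldiv a c

open ResiduatedLattice

section OrderedMonoid

variable {M : Type*} [Monoid M] [Preorder M] [MulLeftReflectLE M] [MulRightReflectLE M]
  {b c : M}

theorem sq_mul_le_mul_of_le_one [MulRightMono M] (hc : c ≤ 1)
    (hbc : b * c * c * b = c * b * b * c) : c ^ 2 * b ≤ b * c := by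
  have key : b * (c * c * b * b) ≤ b * (b * c * b) :=
    calc b * (c * c * b * b) = c * (b * b * c * b) := by
          simp only [← mul_assoc, hbc]
      _ ≤ b * b * c * b := mul_le_of_le_one_left' hc
      _ = b * (b * c * b) := by simp only [mul_assoc]
  rw [sq]
  exact le_of_mul_le_mul_right' (le_of_mul_le_mul_left' key)

theorem mul_sq_le_mul_of_le_one [MulLeftMono M] (hc : c ≤ 1)
    (hbc : b * c * c * b = c * b * b * c) : b * c ^ 2 ≤ c * b := by
  have key : b * (b * c * c * b) ≤ b * (c * b * b) :=
    calc b * (b * c * c * b) = b * c * b * b * c := by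
          simp only [hbc, ← mul_assoc]
      _ ≤ b * c * b * b := mul_le_of_le_one_right' hc
      _ = b * (c * b * b) := by simp only [mul_assoc]
  rw [sq, ← mul_assoc]
  exact le_of_mul_le_mul_right' (le_of_mul_le_mul_left' key)

end OrderedMonoid

namespace ResiduatedLattice

variable {α : Type*} [ResiduatedLattice α]

instance : MulLeftMono α where
  elim a b c hbc := (mul_le_iff_le_ldiv a b (a * c)).2 <|
    hbc.trans <| (mul_le_iff_le_ldiv a c (a * c)).1 le_rfl

instance : MulRightMono α where
  elim a b c hbc := (mul_le_iff_le_rdiv b a (c * a)).2 <|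
    hbc.trans <| (mul_le_iff_le_rdiv c a (c * a)).1 le_rfl

theorem mulLeftReflectLE_of_ldiv_mul_cancel (h : ∀ x y : α, ldiv y (y * x) = x) :
    MulLeftReflectLE α where
  le_of_mul_le_mul_left' {a b₁ b₂} hle := h b₂ a ▸ (mul_le_iff_le_ldiv a b₁ (a * b₂)).1 hle

theorem mulRightReflectLE_of_rdiv_mul_cancel (h : ∀ x y : α, rdiv (x * y) y = x) :
    MulRightReflectLE α where
  le_of_mul_le_mul_right' {a b₁ b₂} hle := h b₂ a ▸ (mul_le_iff_le_rdiv b₁ a (b₂ * a)).1 hle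

end ResiduatedLattice

theorem two_nilpotent_cancellative_conjugation {α : Type*} [ResiduatedLattice α]
    (hcanc : ∀ x y : α, rdiv (x * y) y = x ∧ ldiv y (y * x) = x)
    (hL2 : ∀ x y z : α, x * y * z * y * x = y * x * z * x * y) (a b : α) :
    (a ⊓ 1) ^ 2 * b ≤ b * a ∧ b * (a ⊓ 1) ^ 2 ≤ a * b := by
  have := mulLeftReflectLE_of_ldiv_mul_cancel fun x y ↦ (hcanc x y).2
  have := mulRightReflectLE_of_rdiv_mul_cancel fun x y ↦ (hcanc x y).1
  have hbc : b * (a ⊓ 1) * (a ⊓ 1) * b = (a ⊓ 1) * b * b * (a ⊓ 1) := by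
    simpa only [mul_one] using hL2 b (a ⊓ 1) 1
  exact ⟨(sq_mul_le_mul_of_le_one inf_le_right hbc).trans (mul_le_mul_right inf_le_left b),
    (mul_sq_le_mul_of_le_one inf_le_right hbc).trans (mul_le_mul_left inf_le_left b)⟩
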